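/- For any ν ≥ 0 and x > 0, Σ_{m=1}^∞ f_m(x)² = (x²/(2(ν+1))) f_1(x)² + (x²/2)(2^ν Γ(ν+1) x^{-ν} J_ν(x))² − ((2ν+1)x/(2 sqrt(ν+1))) (2^ν Γ(ν+1) x^{-ν} J_ν(x)) f_1(x), where f_m(x) = 2^ν Γ(ν+1) sqrt(ν+m) x^{-ν} J_{ν+m}(x). In particular, if J_ν(x) = 0 then Σ_{m=1}^∞ f_m(x)² = (x²/(2(ν+1))) f_1(x)². -/

import Mathlib

/-- The Bessel function of the first kind of real order `ν`, defined for
`x > 0` by its power series. -/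
noncomputable def besselJ (ν x : ℝ) : ℝ :=
  ∑' m : ℕ, ((-1 : ℝ) ^ m / (m.factorial * Real.Gamma (m + ν + 1))) *
    (x / 2) ^ (2 * (m : ℝ) + ν)

/-- The normalized Bessel functions
`f_m(x) = 2^ν Γ(ν+1) sqrt(ν+m) x^{-ν} J_{ν+m}(x)`. -/
noncomputable def normBesselF (ν : ℝ) (m : ℕ) (x : ℝ) : ℝ :=
  (2 : ℝ) ^ ν * Real.Gamma (ν + 1) * Real.sqrt (ν + m) * x ^ (-ν) *
    besselJ (ν + m) x

open Real Filter Topology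
noncomputable def besselTerm (μ x : ℝ) (m : ℕ) : ℝ :=
  ((-1 : ℝ) ^ m / (m.factorial * Real.Gamma (m + μ + 1))) * (x / 2) ^ (2 * (m : ℝ) + μ)

lemma besselJ_eq (μ x : ℝ) : besselJ μ x = ∑' m, besselTerm μ x m := rfl

lemma gamma_fact_le (μ : ℝ) (hμ : 0 ≤ μ) (m : ℕ) :
    Real.Gamma (μ + 1) * m.factorial ≤ Real.Gamma (m + μ + 1) := by
  induction m with
  | zero => simp
  | succ n ih =>
    have hpos : (0:ℝ) < (n:ℝ) + μ + 1 := by positivity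
    have h1 : ((n:ℕ)+1 : ℕ) + μ + 1 = ((n:ℝ) + μ + 1) + 1 := by push_cast; ring
    rw [h1, Real.Gamma_add_one (ne_of_gt hpos)]
    have hf : ((n+1).factorial : ℝ) = ((n:ℝ)+1) * n.factorial := by
      push_cast [Nat.factorial_succ]; ring
    rw [hf]
    have hΓpos : 0 < Real.Gamma (μ + 1) := Real.Gamma_pos_of_pos (by linarith)
    calc Real.Gamma (μ+1) * (((n:ℝ)+1) * n.factorial)
        = ((n:ℝ)+1) * (Real.Gamma (μ+1) * n.factorial) := by ring
      _ ≤ ((n:ℝ)+1) * Real.Gamma ((n:ℝ) + μ + 1) := by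
          apply mul_le_mul_of_nonneg_left ih (by positivity)
      _ ≤ ((n:ℝ)+μ+1) * Real.Gamma ((n:ℝ) + μ + 1) := by
          have := Real.Gamma_pos_of_pos hpos
          nlinarith

lemma besselTerm_abs_le (μ x : ℝ) (hμ : 0 ≤ μ) (hx : 0 < x) (m : ℕ) :
    |besselTerm μ x m| ≤ (x/2)^μ / Real.Gamma (μ+1) * ((x^2/4)^m / m.factorial) := by
  have hx2 : (0:ℝ) < x / 2 := by linarith
  have hΓ1 : 0 < Real.Gamma (μ + 1) := Real.Gamma_pos_of_pos (by linarith)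
  have hΓm : 0 < Real.Gamma ((m:ℝ) + μ + 1) := Real.Gamma_pos_of_pos (by positivity)
  have hfac : (0:ℝ) < m.factorial := by positivity
  have habs : |besselTerm μ x m|
      = (x/2) ^ (2*(m:ℝ)+μ) / (m.factorial * Real.Gamma ((m:ℝ) + μ + 1)) := by
    unfold besselTerm
    rw [abs_mul, abs_div, abs_pow, abs_neg, abs_one, one_pow, one_div,
      abs_of_pos (Real.rpow_pos_of_pos hx2 _), abs_of_pos (by positivity)]
    ring
  rw [habs]
  have hexp : (x/2) ^ (2*(m:ℝ)+μ) = (x/2)^μ * (x^2/4)^m := by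
    rw [Real.rpow_add hx2, mul_comm]
    congr 1
    rw [show (2*(m:ℝ)) = ((2*m : ℕ) : ℝ) by push_cast; ring, Real.rpow_natCast,
      pow_mul]
    congr 1
    ring
  rw [hexp]
  have hR : (x/2)^μ / Real.Gamma (μ+1) * ((x^2/4)^m / m.factorial)
      = (x/2)^μ * (x^2/4)^m / ((m.factorial:ℝ) * Real.Gamma (μ+1)) := by ring
  rw [hR]
  gcongr
  have := gamma_fact_le μ hμ m
  have h1 : (1:ℝ) ≤ m.factorial := by exact_mod_cast Nat.one_le_iff_ne_zero.mpr m.factorial_ne_zero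
  nlinarith

lemma summable_besselTerm (μ x : ℝ) (hμ : 0 ≤ μ) (hx : 0 < x) :
    Summable (besselTerm μ x) := by
  apply Summable.of_abs
  apply Summable.of_nonneg_of_le (fun m => abs_nonneg _) (besselTerm_abs_le μ x hμ hx)
  exact (Real.summable_pow_div_factorial (x^2/4)).mul_left _

lemma abs_besselJ_le (μ x : ℝ) (hμ : 0 ≤ μ) (hx : 0 < x) :
    |besselJ μ x| ≤ (x/2)^μ / Real.Gamma (μ+1) * Real.exp (x^2/4) := by
  rw [besselJ_eq]
  have hsum := (summable_besselTerm μ x hμ hx).abs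
  calc |∑' m, besselTerm μ x m| ≤ ∑' m, |besselTerm μ x m| := by
        simpa [Real.norm_eq_abs] using norm_tsum_le_tsum_norm (f := besselTerm μ x)
          (by simpa [Real.norm_eq_abs] using hsum)
    _ ≤ ∑' m : ℕ, (x/2)^μ / Real.Gamma (μ+1) * ((x^2/4)^m / m.factorial) := by
        exact Summable.tsum_le_tsum (besselTerm_abs_le μ x hμ hx) hsum
          ((Real.summable_pow_div_factorial (x^2/4)).mul_left _)
    _ = (x/2)^μ / Real.Gamma (μ+1) * Real.exp (x^2/4) := by
        rw [tsum_mul_left]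
        congr 1
        rw [Real.exp_eq_exp_ℝ, NormedSpace.exp_eq_tsum_div]

lemma besselTerm_zero_eq (μ x : ℝ) (hμ : 0 ≤ μ) (hx : 0 < x) :
    (2*(μ+1)/x) * besselTerm (μ+1) x 0 = besselTerm μ x 0 := by
  unfold besselTerm
  have hx2 : (0:ℝ) < x / 2 := by linarith
  have hΓ : Real.Gamma ((0:ℕ) + (μ+1) + 1) = (μ+1) * Real.Gamma (μ+1) := by
    rw [show ((0:ℕ):ℝ) + (μ+1) + 1 = (μ+1) + 1 by push_cast; ring,
      Real.Gamma_add_one (by positivity)]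
  have he : (x/2) ^ (2*((0:ℕ):ℝ) + (μ+1)) = (x/2)^(2*((0:ℕ):ℝ)+μ) * (x/2) := by
    rw [show 2*((0:ℕ):ℝ) + (μ+1) = (2*((0:ℕ):ℝ)+μ) + 1 by ring, Real.rpow_add hx2,
      Real.rpow_one]
  rw [hΓ, he]
  have h1 : Real.Gamma (μ+1) ≠ 0 := ne_of_gt (Real.Gamma_pos_of_pos (by positivity))
  have h2 : Real.Gamma ((0:ℕ) + μ + 1) = Real.Gamma (μ+1) := by norm_num
  rw [h2]
  field_simp

lemma besselTerm_succ_eq (μ x : ℝ) (hμ : 0 ≤ μ) (hx : 0 < x) (m : ℕ) :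
    (2*(μ+1)/x) * besselTerm (μ+1) x (m+1)
      = besselTerm μ x (m+1) + besselTerm (μ+2) x m := by
  unfold besselTerm
  have hx2 : (0:ℝ) < x / 2 := by linarith
  have hGpos : (0:ℝ) < Real.Gamma ((m:ℝ) + μ + 2) := Real.Gamma_pos_of_pos (by positivity)
  set G := Real.Gamma ((m:ℝ) + μ + 2) with hG
  set P := (x/2) ^ (2*(m:ℝ)+μ) with hP
  have hPpos : 0 < P := Real.rpow_pos_of_pos hx2 _
  -- rewrite the three Gammas
  have hΓ1 : Real.Gamma (((m+1:ℕ):ℝ) + μ + 1) = G := by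
    rw [hG]; congr 1; push_cast; ring
  have hΓ2 : Real.Gamma ((m:ℝ) + (μ+2) + 1) = ((m:ℝ)+μ+2) * G := by
    rw [hG, show (m:ℝ) + (μ+2) + 1 = ((m:ℝ)+μ+2) + 1 by ring,
      Real.Gamma_add_one (by positivity)]
  have hΓ3 : Real.Gamma (((m+1:ℕ):ℝ) + (μ+1) + 1) = ((m:ℝ)+μ+2) * G := by
    rw [hG, show ((m+1:ℕ):ℝ) + (μ+1) + 1 = ((m:ℝ)+μ+2) + 1 by push_cast; ring,
      Real.Gamma_add_one (by positivity)]
  -- rewrite the three rpow's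
  have he1 : (x/2) ^ (2*((m+1:ℕ):ℝ) + μ) = P * (x/2)^(2:ℕ) := by
    rw [hP, show 2*((m+1:ℕ):ℝ) + μ = (2*(m:ℝ)+μ) + ((2:ℕ):ℝ) by push_cast; ring,
      Real.rpow_add hx2, Real.rpow_natCast]
  have he2 : (x/2) ^ (2*(m:ℝ) + (μ+2)) = P * (x/2)^(2:ℕ) := by
    rw [hP, show 2*(m:ℝ) + (μ+2) = (2*(m:ℝ)+μ) + ((2:ℕ):ℝ) by push_cast; ring,
      Real.rpow_add hx2, Real.rpow_natCast]
  have he3 : (x/2) ^ (2*((m+1:ℕ):ℝ) + (μ+1)) = P * (x/2)^(3:ℕ) := by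
    rw [hP, show 2*((m+1:ℕ):ℝ) + (μ+1) = (2*(m:ℝ)+μ) + ((3:ℕ):ℝ) by push_cast; ring,
      Real.rpow_add hx2, Real.rpow_natCast]
  rw [hΓ1, hΓ2, hΓ3, he1, he2, he3]
  have hf : (((m+1).factorial : ℕ) : ℝ) = ((m:ℝ)+1) * m.factorial := by
    push_cast [Nat.factorial_succ]; ring
  rw [hf]
  have h1 : ((m.factorial : ℕ):ℝ) ≠ 0 := by positivity
  have h2 : G ≠ 0 := ne_of_gt hGpos
  have h3 : (m:ℝ)+μ+2 ≠ 0 := by positivity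
  have h4 : (m:ℝ)+1 ≠ 0 := by positivity
  have h5 : x ≠ 0 := ne_of_gt hx
  field_simp
  ring

lemma besselJ_recurrence (μ x : ℝ) (hμ : 0 ≤ μ) (hx : 0 < x) :
    besselJ μ x + besselJ (μ + 2) x = (2 * (μ + 1) / x) * besselJ (μ + 1) x := by
  have hs1 := summable_besselTerm μ x hμ hx
  have hs2 := summable_besselTerm (μ+2) x (by linarith) hx
  have hs3 := (summable_besselTerm (μ+1) x (by linarith) hx).mul_left (2*(μ+1)/x)
  rw [besselJ_eq, besselJ_eq, besselJ_eq, ← tsum_mul_left]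
  rw [Summable.tsum_eq_zero_add hs3, Summable.tsum_eq_zero_add hs1]
  have hshift : ∀ m : ℕ, (2*(μ+1)/x) * besselTerm (μ+1) x (m+1)
      = besselTerm μ x (m+1) + besselTerm (μ+2) x m :=
    besselTerm_succ_eq μ x hμ hx
  rw [besselTerm_zero_eq μ x hμ hx, tsum_congr hshift,
    Summable.tsum_add ((summable_nat_add_iff 1).mpr hs1) hs2]
  ring

lemma aux_tendsto (y : ℝ) (hy : 0 ≤ y) :
    Tendsto (fun n : ℕ => ((n:ℝ)+1) * y^n / n.factorial) atTop (𝓝 0) := by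
  apply squeeze_zero_norm (a := fun n : ℕ => (2*y)^n / n.factorial)
  · intro n
    have h1 : ((n:ℝ)+1) ≤ 2^n := by
      exact_mod_cast Nat.lt_two_pow_self (n := n)
    have hfac : (0:ℝ) < n.factorial := by positivity
    rw [Real.norm_eq_abs, abs_of_nonneg (by positivity)]
    rw [div_le_div_iff₀ hfac hfac, mul_pow]
    have : ((n:ℝ)+1) * y^n ≤ 2^n * y^n := by
      apply mul_le_mul_of_nonneg_right h1 (by positivity)
    nlinarith
  · exact FloorSemiring.tendsto_pow_div_factorial_atTop (2*y)

lemma bessel_tail_bound (ν x : ℝ) (hν : 0 ≤ ν) (hx : 0 < x) (n : ℕ) :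
    |besselJ (ν + n) x| ≤
      ((x/2)^ν / Real.Gamma (ν+1) * Real.exp (x^2/4)) * ((x/2)^n / n.factorial) := by
  have hx2 : (0:ℝ) < x / 2 := by linarith
  have h := abs_besselJ_le (ν + n) x (by positivity) hx
  have hΓ1 : 0 < Real.Gamma (ν + 1) := Real.Gamma_pos_of_pos (by linarith)
  have hΓn : 0 < Real.Gamma (ν + (n:ℝ) + 1) := Real.Gamma_pos_of_pos (by positivity)
  have hfac : (0:ℝ) < n.factorial := by positivity
  refine h.trans ?_
  have he : (x/2) ^ (ν + (n:ℝ)) = (x/2)^ν * (x/2)^n := by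
    rw [Real.rpow_add hx2, Real.rpow_natCast]
  rw [he]
  have hΓle : Real.Gamma (ν+1) * n.factorial ≤ Real.Gamma (ν + (n:ℝ) + 1) := by
    have := gamma_fact_le ν hν n
    have h2 : Real.Gamma ((n:ℝ) + ν + 1) = Real.Gamma (ν + (n:ℝ) + 1) := by ring_nf
    linarith [this.trans_eq h2]
  have hrw : ((x/2)^ν / Real.Gamma (ν+1) * Real.exp (x^2/4)) * ((x/2)^n / n.factorial)
      = (x/2)^ν * (x/2)^n / (Real.Gamma (ν+1) * n.factorial) * Real.exp (x^2/4) := by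
    ring
  rw [hrw]
  gcongr

lemma tendsto_besselJ_tail (ν x : ℝ) (hν : 0 ≤ ν) (hx : 0 < x) :
    Tendsto (fun n : ℕ => besselJ (ν + n) x) atTop (𝓝 0) := by
  apply squeeze_zero_norm (bessel_tail_bound ν x hν hx)
  have h := (FloorSemiring.tendsto_pow_div_factorial_atTop (x/2)).const_mul
    ((x/2)^ν / Real.Gamma (ν+1) * Real.exp (x^2/4))
  simpa using h

lemma tendsto_coeff_besselJ_tail (ν x : ℝ) (hν : 0 ≤ ν) (hx : 0 < x) :
    Tendsto (fun n : ℕ => (2*(ν+n)+1) * besselJ (ν + n) x) atTop (𝓝 0) := by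
  set C := (x/2)^ν / Real.Gamma (ν+1) * Real.exp (x^2/4) with hC
  have hCpos : 0 < C := by
    have := Real.Gamma_pos_of_pos (show (0:ℝ) < ν + 1 by linarith)
    positivity
  apply squeeze_zero_norm (a := fun n : ℕ => (2*ν+3) * C * (((n:ℝ)+1) * (x/2)^n / n.factorial))
  · intro n
    rw [Real.norm_eq_abs, abs_mul]
    have h1 : |2*(ν+(n:ℝ))+1| = 2*(ν+(n:ℝ))+1 := abs_of_nonneg (by positivity)
    rw [h1]
    have h2 := bessel_tail_bound ν x hν hx n
    have h3 : 2*(ν+(n:ℝ))+1 ≤ (2*ν+3) * ((n:ℝ)+1) := by nlinarith [Nat.cast_nonneg (α := ℝ) n]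
    have hb : (0:ℝ) ≤ |besselJ (ν + n) x| := abs_nonneg _
    have hfac : (0:ℝ) < n.factorial := by positivity
    have hp : (0:ℝ) ≤ (x/2)^n / n.factorial := by positivity
    calc (2*(ν+(n:ℝ))+1) * |besselJ (ν + n) x|
        ≤ ((2*ν+3) * ((n:ℝ)+1)) * (C * ((x/2)^n / n.factorial)) := by
          apply mul_le_mul h3 h2 hb (by positivity)
      _ = (2*ν+3) * C * (((n:ℝ)+1) * (x/2)^n / n.factorial) := by ring
  · have h := (aux_tendsto (x/2) (by positivity)).const_mul ((2*ν+3) * C)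
    simpa using h

lemma hasSum_bessel (ν x : ℝ) (hν : 0 ≤ ν) (hx : 0 < x) :
    HasSum (fun m : ℕ => (ν + m + 1) * (besselJ (ν + m + 1) x)^2)
      (x^2/2 * ((besselJ ν x)^2 + (besselJ (ν+1) x)^2)
        - (2*ν+1)*x/2 * (besselJ ν x) * (besselJ (ν+1) x)) := by
  set T : ℕ → ℝ := fun n => x^2/2 * ((besselJ (ν+n) x)^2 + (besselJ (ν+n+1) x)^2)
    - (2*(ν+n)+1)*x/2 * (besselJ (ν+n) x) * (besselJ (ν+n+1) x) with hT
  have htel : ∀ m : ℕ, (ν + m + 1) * (besselJ (ν + m + 1) x)^2 = T m - T (m+1) := by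
    intro m
    have hrec := besselJ_recurrence (ν + m) x (by positivity) hx
    set a := besselJ (ν + (m:ℝ)) x with ha
    set b := besselJ (ν + (m:ℝ) + 1) x with hb
    set c := besselJ (ν + (m:ℝ) + 2) x with hc
    have hrec' : a + c = 2*(ν+(m:ℝ)+1)/x * b := by
      rw [ha, hc, hb]
      convert hrec using 3
    have hcc : c = 2*(ν+(m:ℝ)+1)/x * b - a := by linarith
    have e1 : T m = x^2/2 * (a^2 + b^2) - (2*(ν+(m:ℝ))+1)*x/2 * a * b := rfl
    have e2 : T (m+1) = x^2/2 * (b^2 + c^2) - (2*(ν+(m:ℝ))+3)*x/2 * b * c := by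
      have c1 : ν + ((m+1 : ℕ):ℝ) = ν + (m:ℝ) + 1 := by push_cast; ring
      have c2 : ν + ((m+1 : ℕ):ℝ) + 1 = ν + (m:ℝ) + 2 := by push_cast; ring
      have d2 : ν + (m:ℝ) + 1 + 1 = ν + (m:ℝ) + 2 := by ring
      have d3 : 2*(ν + (m:ℝ) + 1)+1 = 2*(ν+(m:ℝ))+3 := by ring
      simp only [hT, c1, d2, d3]
      rfl
    rw [e1, e2, hcc]
    field_simp
    ring
  rw [hasSum_iff_tendsto_nat_of_nonneg (fun i => by positivity)]
  have hsum : ∀ n : ℕ, ∑ i ∈ Finset.range n, (ν + i + 1) * (besselJ (ν + i + 1) x)^2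
      = T 0 - T n := by
    intro n
    rw [Finset.sum_congr rfl (fun i _ => htel i), Finset.sum_range_sub' T n]
  simp only [hsum]
  have h0 : Tendsto (fun n : ℕ => besselJ (ν + n) x) atTop (𝓝 0) :=
    tendsto_besselJ_tail ν x hν hx
  have h1 : Tendsto (fun n : ℕ => besselJ (ν + n + 1) x) atTop (𝓝 0) := by
    have := h0.comp (tendsto_add_atTop_nat 1)
    convert this using 2 with n
    simp only [Function.comp_apply]
    push_cast
    ring_nf
  have h2 : Tendsto (fun n : ℕ => (2*(ν+n)+1) * besselJ (ν + n) x) atTop (𝓝 0) :=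
    tendsto_coeff_besselJ_tail ν x hν hx
  have hTlim : Tendsto T atTop (𝓝 0) := by
    have : Tendsto (fun n : ℕ => x^2/2 * (besselJ (ν+n) x * besselJ (ν+n) x
        + besselJ (ν+n+1) x * besselJ (ν+n+1) x)
        - x/2 * (((2*(ν+n)+1) * besselJ (ν+n) x) * besselJ (ν+n+1) x)) atTop
        (𝓝 (x^2/2 * (0*0 + 0*0) - x/2 * (0*0))) := by
      exact (((h0.mul h0).add (h1.mul h1)).const_mul _).sub ((h2.mul h1).const_mul _)
    simp only [mul_zero, zero_mul, add_zero, sub_zero, zero_add] at this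
    convert this using 2 with n
    rw [hT]
    ring
  have hfinal : Tendsto (fun n : ℕ => T 0 - T n) atTop (𝓝 (T 0 - 0)) :=
    tendsto_const_nhds.sub hTlim
  rw [sub_zero] at hfinal
  convert hfinal using 2
  rw [hT]
  norm_num

/-- Closed form for `Σ_{m=1}^∞ f_m(x)²` for any order `ν ≥ 0`; in particular,
at a zero of `J_ν` the sum equals `(x²/(2(ν+1))) f_1(x)²`. -/
theorem normalized_bessel_sum_of_squares (ν : ℝ) (hν : 0 ≤ ν) (x : ℝ) (hx : 0 < x) :
    (∑' m : ℕ, (normBesselF ν (m + 1) x) ^ 2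
      = (x ^ 2 / (2 * (ν + 1))) * (normBesselF ν 1 x) ^ 2
        + (x ^ 2 / 2) *
          ((2 : ℝ) ^ ν * Real.Gamma (ν + 1) * x ^ (-ν) * besselJ ν x) ^ 2
        - ((2 * ν + 1) * x / (2 * Real.sqrt (ν + 1))) *
          ((2 : ℝ) ^ ν * Real.Gamma (ν + 1) * x ^ (-ν) * besselJ ν x) *
          normBesselF ν 1 x) ∧
    (besselJ ν x = 0 →
      ∑' m : ℕ, (normBesselF ν (m + 1) x) ^ 2
        = (x ^ 2 / (2 * (ν + 1))) * (normBesselF ν 1 x) ^ 2) := by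
  have hsum := hasSum_bessel ν x hν hx
  set K := (2:ℝ)^ν * Real.Gamma (ν+1) * x^(-ν) with hK
  have hpt : ∀ m : ℕ, (normBesselF ν (m+1) x)^2
      = K^2 * ((ν + m + 1) * (besselJ (ν + m + 1) x)^2) := by
    intro m
    unfold normBesselF
    have c' : ν + ((m+1:ℕ):ℝ) = ν + (m:ℝ) + 1 := by push_cast; ring
    simp only [c']
    have hsq : Real.sqrt (ν+(m:ℝ)+1)^2 = ν+(m:ℝ)+1 := Real.sq_sqrt (by positivity)
    rw [show (2:ℝ)^ν * Real.Gamma (ν+1) * Real.sqrt (ν+(m:ℝ)+1) * x^(-ν)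
        * besselJ (ν+(m:ℝ)+1) x
        = (K * besselJ (ν+(m:ℝ)+1) x) * Real.sqrt (ν+(m:ℝ)+1) from by rw [hK]; ring,
      mul_pow, hsq]
    ring
  have hmain : ∑' m : ℕ, (normBesselF ν (m + 1) x) ^ 2
      = K^2 * (x^2/2 * ((besselJ ν x)^2 + (besselJ (ν+1) x)^2)
        - (2*ν+1)*x/2 * (besselJ ν x) * (besselJ (ν+1) x)) := by
    rw [tsum_congr hpt, tsum_mul_left, hsum.tsum_eq]
  set s := Real.sqrt (ν+1) with hs
  have hs2 : s^2 = ν + 1 := Real.sq_sqrt (by linarith)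
  have hspos : 0 < s := Real.sqrt_pos.mpr (by linarith)
  have e1 : normBesselF ν 1 x = K * s * besselJ (ν+1) x := by
    unfold normBesselF
    rw [hK, hs]
    simp only [Nat.cast_one]
    ring
  have h1 : ∑' m : ℕ, (normBesselF ν (m + 1) x) ^ 2
      = (x ^ 2 / (2 * (ν + 1))) * (normBesselF ν 1 x) ^ 2
        + (x ^ 2 / 2) * (K * besselJ ν x) ^ 2
        - ((2 * ν + 1) * x / (2 * s)) * (K * besselJ ν x) * normBesselF ν 1 x := by
    rw [hmain, e1]
    set Ja := besselJ ν x
    set Jb := besselJ (ν+1) x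
    rw [← hs2]
    field_simp
    ring
  refine ⟨h1, fun hz => ?_⟩
  rw [h1, hz]
  ring
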